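/- arXiv:2108.11613 — 3 statements merged into one kernel-verified Lean document; each statement's English description precedes it below -/
import Mathlib

section
/- There exist a constant c > 0 and an integer N such that for every n ≥ N, when the n edges e_1, …, e_n of a round on n agents are chosen independently and uniformly at random among all C(n,2) unordered pairs of distinct elements of {1, …, n}, the expected value of M(e), the maximum length of a monotone interference path in the round (equivalently, one plus the maximum length of a directed path in the dependency DAG of the round), is at least c · (log n)/(log log n). -/
open Finset

/-- An edge of the complete graph `K_n`: an unordered pair of two distinct
elements of `{1, …, n}`, modeled as a 2-element subset of `Fin n`. -/
abbrev Edge (n : ℕ) := {s : Finset (Fin n) // s.card = 2}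

/-- A round on `n` agents: a sequence of `n` interactions (edges). -/
abbrev Round (n : ℕ) := Fin n → Edge n

/-- `IsMonoPath e t` says that the strictly increasing sequence of indices
`t 0 < t 1 < … < t (k-1)` (interaction labels) forms a monotone interference
path of length `k` in the round `e`: consecutive interactions share an agent. -/
def IsMonoPath {n k : ℕ} (e : Round n) (t : Fin k → Fin n) : Prop :=
  StrictMono t ∧
    ∀ i j : Fin k, (i : ℕ) + 1 = (j : ℕ) →
      ((e (t i)).1 ∩ (e (t j)).1).Nonempty

/-- `M e` is the maximum length of a monotone interference path in the round `e`. -/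
noncomputable def M {n : ℕ} (e : Round n) : ℕ :=
  sSup {k | ∃ t : Fin k → Fin n, IsMonoPath e t}

/-!
Edges sharing an agent form, in time order, a monotone interference path, so `M e ≥ k` as soon
as some agent lies in `k` of the edges. Let `Y` count the pairs `(v, S)` with `|S| = k` and
`v ∈ e t` for all `t ∈ S`. An edge contains a given agent with probability `2/n`, so
`𝔼 Y = n · C(n,k) · (2/n)^k`. Two distinct agents lie together in only one of the `C(n,2)` edges,
which makes their contributions to `Y` negatively correlated, while for a single agent the
pairs `(S, T)` contribute at most `𝔼 Y · 2^k e²` to `𝔼 Y²`. Hence `𝔼 Y² ≤ 2 (𝔼 Y)²` once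
`e² k^k ≤ n`, the second moment method gives `P(Y ≠ 0) ≥ 1/2`, and `𝔼 M ≥ k/2`; the choice
`k ≈ log n / (2 log log n)` is admissible.
-/

open scoped BigOperators
open Real

section ProductSpace

variable {ι β : Type*} [Fintype ι] [DecidableEq ι] [Fintype β]

theorem expect_pi_prod (f : ι → β → ℝ) :
    𝔼 e : ι → β, ∏ i, f i (e i) = ∏ i, 𝔼 x, f i x := by
  simp only [Fintype.expect_eq_sum_div_card, prod_div_distrib, prod_const, card_univ,
    Fintype.card_pi, prod_univ_sum, Fintype.piFinset_univ]
  push_cast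
  rfl

variable [Nonempty β]

theorem expect_prod_apply_eq_pow (s : Finset ι) (f : β → ℝ) :
    𝔼 e : ι → β, ∏ i ∈ s, f (e i) = (𝔼 x, f x) ^ #s := by
  have h := expect_pi_prod fun i x => if i ∈ s then f x else 1
  simp only [Fintype.prod_ite_mem] at h
  rw [h, ← prod_const, ← Fintype.prod_ite_mem s fun _ => 𝔼 x, f x]
  refine prod_congr rfl fun i _ => ?_
  split_ifs <;> simp

theorem expect_prod_mul_prod_le {a b : β → ℝ} (ha : 0 ≤ a) (hb : 0 ≤ b)
    (hab : 𝔼 x, a x * b x ≤ (𝔼 x, a x) * 𝔼 x, b x) (S T : Finset ι) :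
    𝔼 e : ι → β, (∏ i ∈ S, a (e i)) * ∏ i ∈ T, b (e i) ≤ (𝔼 x, a x) ^ #S * (𝔼 x, b x) ^ #T := by
  have h := expect_pi_prod fun i x => (if i ∈ S then a x else 1) * if i ∈ T then b x else 1
  simp only [prod_mul_distrib, Fintype.prod_ite_mem] at h
  rw [h, ← prod_const, ← prod_const, ← Fintype.prod_ite_mem S fun _ => 𝔼 x, a x,
    ← Fintype.prod_ite_mem T fun _ => 𝔼 x, b x, ← prod_mul_distrib]
  refine prod_le_prod (fun i _ => expect_nonneg fun x _ => ?_) fun i _ => ?_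
  · exact mul_nonneg (by split_ifs; exacts [ha x, zero_le_one])
      (by split_ifs; exacts [hb x, zero_le_one])
  · split_ifs <;> simp [hab]

end ProductSpace

theorem sq_expect_le_expect_indicator_mul_expect_sq {α : Type*} [Fintype α] (f : α → ℝ) :
    (𝔼 x, f x) ^ 2 ≤ (𝔼 x, if f x = 0 then (0 : ℝ) else 1) * 𝔼 x, f x ^ 2 := by
  have h := expect_mul_sq_le_sq_mul_sq univ (fun x => if f x = 0 then (0 : ℝ) else 1) f
  have h1 (x : α) : (if f x = 0 then (0 : ℝ) else 1) * f x = f x := by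
    split_ifs with hx <;> simp [hx]
  have h2 (x : α) : (if f x = 0 then (0 : ℝ) else 1) ^ 2 = if f x = 0 then 0 else 1 := by
    split_ifs <;> norm_num
  simpa only [h1, h2] using h

theorem sum_powersetCard_pow_card_union_le {α : Type*} [Fintype α] [DecidableEq α]
    (S : Finset α) (k : ℕ) {p : ℝ} (hp : 0 ≤ p) :
    ∑ T ∈ powersetCard k univ, p ^ #(S ∪ T) ≤ (2 * p) ^ #S * exp (p * Fintype.card α) := by
  set g : α → ℝ := fun i => if i ∈ Sᶜ then p else 1
  have hg (T : Finset α) : ∏ i ∈ T, g i = p ^ #(T \ S) := by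
    rw [prod_ite_mem, prod_const, sdiff_eq_inter_compl]
  calc ∑ T ∈ powersetCard k univ, p ^ #(S ∪ T)
      = p ^ #S * ∑ T ∈ powersetCard k univ, ∏ i ∈ T, g i := by
        rw [mul_sum]
        refine sum_congr rfl fun T _ => ?_
        rw [hg, ← pow_add, add_comm, card_sdiff_add_card, union_comm]
    _ ≤ p ^ #S * ∑ T ∈ univ.powerset, ∏ i ∈ T, g i := by
        gcongr
        exact fun T hT => mem_powerset.2 (mem_powersetCard.1 hT).1
    _ = p ^ #S * ∏ i, (1 + g i) := by rw [prod_one_add]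
    _ ≤ p ^ #S * ∏ i, ((if i ∈ S then 2 else 1) * exp p) := by
        gcongr with i
        by_cases hi : i ∈ S
        · simp only [g, mem_compl, hi, not_true, if_false, if_true]
          linarith [one_le_exp hp]
        · simp only [g, mem_compl, hi, not_false_eq_true, if_true, if_false, one_mul]
          linarith [add_one_le_exp p]
    _ = (2 * p) ^ #S * exp (p * Fintype.card α) := by
        rw [prod_mul_distrib, Fintype.prod_ite_mem, prod_const, prod_const, card_univ,
          ← exp_nat_mul, mul_pow]
        ring_nf

theorem pow_div_pow_le_choose {n k : ℕ} (h : k ≤ n) : ((n : ℝ) / k) ^ k ≤ n.choose k := by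
  induction k generalizing n with
  | zero => simp
  | succ k ih =>
    obtain ⟨m, rfl⟩ : ∃ m, n = m + 1 := ⟨n - 1, by omega⟩
    have hkm : k ≤ m := by omega
    have hratio : (((m + 1 : ℕ) : ℝ) / (k + 1 : ℕ)) ^ k ≤ ((m : ℝ) / k) ^ k := by
      rcases Nat.eq_zero_or_pos k with rfl | hk
      · simp
      · refine pow_le_pow_left₀ (by positivity) ?_ k
        rw [div_le_div_iff₀ (by positivity) (by positivity)]
        push_cast
        nlinarith [(Nat.cast_le (α := ℝ)).2 hkm]
    have hchoose : (((m + 1).choose (k + 1) : ℕ) : ℝ) =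
        ((m + 1 : ℕ) : ℝ) / (k + 1 : ℕ) * m.choose k := by
      have := congrArg (Nat.cast (R := ℝ)) (Nat.add_one_mul_choose_eq m k)
      push_cast at this ⊢
      field_simp
      linarith
    calc (((m + 1 : ℕ) : ℝ) / (k + 1 : ℕ)) ^ (k + 1)
        = ((m + 1 : ℕ) : ℝ) / (k + 1 : ℕ) * (((m + 1 : ℕ) : ℝ) / (k + 1 : ℕ)) ^ k := pow_succ' _ _
      _ ≤ ((m + 1 : ℕ) : ℝ) / (k + 1 : ℕ) * m.choose k := by
        gcongr
        exact hratio.trans (ih hkm)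
      _ = _ := hchoose.symm

theorem exists_nat_le_and_exp_two_mul_pow_le {n : ℕ} (hl : 1 ≤ log (log n))
    (h4 : 4 * log (log n) ≤ log n) :
    ∃ k : ℕ, log n / (4 * log (log n)) ≤ k ∧ exp 2 * k ^ k ≤ n := by
  set L := log n
  set l := log L
  have hn : 0 < (n : ℝ) := by
    rcases Nat.eq_zero_or_pos n with rfl | hn
    · simp only [CharP.cast_eq_zero, log_zero, L] at h4
      linarith
    · exact_mod_cast hn
  set x := L / (2 * l)
  have hx : 2 ≤ x := by rw [le_div_iff₀ (by positivity)]; linarith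
  have hxl : x * l = L / 2 := by simp only [x]; field_simp
  refine ⟨⌊x⌋₊, ?_, ?_⟩
  · have := Nat.lt_floor_add_one x
    calc L / (4 * l) = x / 2 := by ring
      _ ≤ ⌊x⌋₊ := by linarith
  · set k := ⌊x⌋₊
    have hk1 : (1 : ℝ) ≤ k := by
      have : 1 ≤ k := Nat.le_floor (by rw [Nat.cast_one]; linarith)
      exact_mod_cast this
    have hkx : (k : ℝ) ≤ x := Nat.floor_le (by linarith)
    have hlogk : log k ≤ l := log_le_log (by positivity) (by nlinarith)
    have hklogk : k * log k ≤ L / 2 := by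
      rw [← hxl]
      exact mul_le_mul hkx hlogk (log_nonneg hk1) (by linarith)
    calc exp 2 * k ^ k = exp (2 + k * log k) := by
          rw [exp_add, ← log_pow, exp_log (by positivity)]
      _ ≤ exp L := exp_le_exp.2 (by linarith)
      _ = n := exp_log hn

section RandomRound

variable {n : ℕ}

theorem card_edge (n : ℕ) : Fintype.card (Edge n) = n.choose 2 := by
  simp

theorem card_filter_mem_edge (v : Fin n) : #{x : Edge n | v ∈ x.1} = n - 1 := by
  have h : #(univ.erase v) = n - 1 := by simp
  rw [← h]
  symm
  refine card_bij (fun w hw => ⟨{v, w}, card_pair (ne_of_mem_erase hw).symm⟩)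
    (fun w _ => by simp) (fun w hw w' hw' h => ?_) fun x hx => ?_
  · have hpair : ({v, w} : Finset (Fin n)) = {v, w'} := congrArg Subtype.val h
    have hmem : w ∈ ({v, w'} : Finset (Fin n)) := hpair ▸ mem_insert_of_mem (mem_singleton_self w)
    simpa [ne_of_mem_erase hw] using hmem
  · obtain ⟨a, b, hab, hx'⟩ := card_eq_two.1 x.2
    have hv : v = a ∨ v = b := by simpa [hx'] using (mem_filter.1 hx).2
    rcases hv with rfl | rfl
    · exact ⟨b, by simpa using hab.symm, Subtype.ext hx'.symm⟩
    · exact ⟨a, by simpa using hab, Subtype.ext (hx'.trans (pair_comm _ _)).symm⟩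

theorem card_filter_mem_mem_edge_le_one {v w : Fin n} (h : v ≠ w) :
    #{x : Edge n | v ∈ x.1 ∧ w ∈ x.1} ≤ 1 := by
  have key (x : Edge n) (hx : v ∈ x.1 ∧ w ∈ x.1) : x.1 = {v, w} :=
    (eq_of_subset_of_card_le (insert_subset hx.1 (singleton_subset_iff.2 hx.2))
      (by rw [x.2, card_pair h])).symm
  refine card_le_one.2 fun x hx y hy => Subtype.ext ?_
  rw [key x (mem_filter.1 hx).2, key y (mem_filter.1 hy).2]

def incidence (v : Fin n) (x : Edge n) : ℝ := if v ∈ x.1 then 1 else 0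

theorem incidence_nonneg (v : Fin n) : 0 ≤ incidence v := fun x => by
  unfold incidence; split_ifs <;> norm_num

theorem expect_incidence (hn : 2 ≤ n) (v : Fin n) : 𝔼 x, incidence v x = 2 / n := by
  have hn' : (n : ℝ) - 1 ≠ 0 := by
    have : (2 : ℝ) ≤ n := by exact_mod_cast hn
    linarith
  rw [Fintype.expect_eq_sum_div_card]
  simp only [incidence, sum_boole, card_filter_mem_edge, card_edge, Nat.cast_choose_two,
    Nat.cast_sub (by omega : 1 ≤ n), Nat.cast_one]
  field_simp

theorem expect_incidence_mul_le {v w : Fin n} (h : v ≠ w) :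
    𝔼 x, incidence v x * incidence w x ≤ (𝔼 x, incidence v x) * 𝔼 x, incidence w x := by
  have hn : 1 < n := by simpa using Fintype.one_lt_card_iff.2 ⟨v, w, h⟩
  have hn' : (2 : ℝ) ≤ n := by exact_mod_cast hn
  rw [expect_incidence hn, expect_incidence hn, Fintype.expect_eq_sum_div_card]
  simp only [incidence, ite_zero_mul_ite_zero, mul_one, sum_boole, card_edge,
    Nat.cast_choose_two]
  rw [div_le_iff₀ (by nlinarith)]
  calc (#{x : Edge n | v ∈ x.1 ∧ w ∈ x.1} : ℝ) ≤ 1 := by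
        exact_mod_cast card_filter_mem_mem_edge_le_one h
    _ ≤ 2 / n * (2 / n) * (n * (n - 1) / 2) := by
      field_simp
      nlinarith

def starIndicator (e : Round n) (v : Fin n) (S : Finset (Fin n)) : ℝ :=
  if ∀ t ∈ S, v ∈ (e t).1 then 1 else 0

def starCountAt (e : Round n) (k : ℕ) (v : Fin n) : ℝ :=
  ∑ S ∈ powersetCard k univ, starIndicator e v S

def starCount (e : Round n) (k : ℕ) : ℝ :=
  ∑ v, starCountAt e k v

theorem starIndicator_eq_prod (e : Round n) (v : Fin n) (S : Finset (Fin n)) :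
    starIndicator e v S = ∏ t ∈ S, incidence v (e t) := by
  simp [starIndicator, incidence, prod_boole]

theorem starIndicator_mul_self (e : Round n) (v : Fin n) (S T : Finset (Fin n)) :
    starIndicator e v S * starIndicator e v T = starIndicator e v (S ∪ T) := by
  simp only [starIndicator, ite_zero_mul_ite_zero, mul_one, forall_mem_union]

theorem card_le_M_of_forall_mem {e : Round n} {v : Fin n} {S : Finset (Fin n)}
    (hS : ∀ t ∈ S, v ∈ (e t).1) : #S ≤ M e := by
  refine le_csSup ⟨n, fun m ⟨t, ht, _⟩ => ?_⟩
    ⟨S.orderEmbOfFin rfl, (S.orderEmbOfFin rfl).strictMono, fun i j _ => ⟨v, ?_⟩⟩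
  · simpa using Fintype.card_le_of_injective t ht.injective
  · exact mem_inter.2 ⟨hS _ (S.orderEmbOfFin_mem rfl i), hS _ (S.orderEmbOfFin_mem rfl j)⟩

theorem le_M_of_starCount_ne_zero {e : Round n} {k : ℕ} (h : starCount e k ≠ 0) : k ≤ M e := by
  obtain ⟨v, -, hv⟩ := exists_ne_zero_of_sum_ne_zero h
  obtain ⟨S, hS, hSv⟩ := exists_ne_zero_of_sum_ne_zero hv
  rw [← (mem_powersetCard.1 hS).2]
  by_contra! hlt
  exact hSv (if_neg fun hmem => hlt.not_ge (card_le_M_of_forall_mem hmem))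

theorem Edge.nonempty (hn : 2 ≤ n) : Nonempty (Edge n) :=
  Fintype.card_pos_iff.1 (card_edge n ▸ Nat.choose_pos hn)

theorem expect_starIndicator (hn : 2 ≤ n) (v : Fin n) (S : Finset (Fin n)) :
    𝔼 e : Round n, starIndicator e v S = (2 / n) ^ #S := by
  have := Edge.nonempty hn
  simp_rw [starIndicator_eq_prod]
  rw [expect_prod_apply_eq_pow, expect_incidence hn]

theorem expect_starCountAt (hn : 2 ≤ n) (k : ℕ) (v : Fin n) :
    𝔼 e : Round n, starCountAt e k v = n.choose k * (2 / n) ^ k := by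
  simp_rw [starCountAt]
  rw [expect_sum_comm, sum_congr rfl fun S hS => by
    rw [expect_starIndicator hn, (mem_powersetCard.1 hS).2]]
  simp

theorem expect_starCount (hn : 2 ≤ n) (k : ℕ) :
    𝔼 e : Round n, starCount e k = n * (n.choose k * (2 / n) ^ k) := by
  simp_rw [starCount]
  rw [expect_sum_comm]
  simp [expect_starCountAt hn]

theorem expect_starCountAt_mul_le {v w : Fin n} (h : v ≠ w) (k : ℕ) :
    𝔼 e : Round n, starCountAt e k v * starCountAt e k w ≤ (n.choose k * (2 / n) ^ k) ^ 2 := by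
  have hn : 1 < n := by simpa using Fintype.one_lt_card_iff.2 ⟨v, w, h⟩
  have := Edge.nonempty hn
  have hST (S T : Finset (Fin n)) (hS : #S = k) (hT : #T = k) :
      𝔼 e : Round n, starIndicator e v S * starIndicator e w T ≤ (2 / n) ^ k * (2 / n) ^ k := by
    simp_rw [starIndicator_eq_prod]
    have := expect_prod_mul_prod_le (incidence_nonneg v) (incidence_nonneg w)
      (expect_incidence_mul_le h) S T
    rwa [expect_incidence hn, expect_incidence hn, hS, hT] at this
  simp_rw [starCountAt, sum_mul_sum]
  rw [expect_sum_comm]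
  calc ∑ S ∈ powersetCard k univ, 𝔼 e : Round n, ∑ T ∈ powersetCard k univ,
        starIndicator e v S * starIndicator e w T
      ≤ ∑ S ∈ powersetCard k univ, ∑ T ∈ powersetCard k univ, (2 / n : ℝ) ^ k * (2 / n) ^ k := by
        refine sum_le_sum fun S hS => ?_
        rw [expect_sum_comm]
        exact sum_le_sum fun T hT => hST S T (mem_powersetCard.1 hS).2 (mem_powersetCard.1 hT).2
    _ = (n.choose k * (2 / n) ^ k) ^ 2 := by
        simp only [sum_const, card_powersetCard, card_univ, Fintype.card_fin, nsmul_eq_mul]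
        ring

theorem expect_starCountAt_sq_le (hn : 2 ≤ n) (k : ℕ) (v : Fin n) :
    𝔼 e : Round n, starCountAt e k v ^ 2 ≤ n.choose k * (2 / n) ^ k * (2 ^ k * exp 2) := by
  have hn' : (n : ℝ) ≠ 0 := by positivity
  simp_rw [sq, starCountAt, sum_mul_sum, starIndicator_mul_self]
  rw [expect_sum_comm]
  calc ∑ S ∈ powersetCard k univ, 𝔼 e : Round n, ∑ T ∈ powersetCard k univ,
        starIndicator e v (S ∪ T)
      = ∑ S ∈ powersetCard k univ, ∑ T ∈ powersetCard k univ, (2 / n : ℝ) ^ #(S ∪ T) := by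
        refine sum_congr rfl fun S _ => ?_
        rw [expect_sum_comm]
        simp_rw [expect_starIndicator hn]
    _ ≤ ∑ S ∈ powersetCard k univ, (2 * (2 / n) : ℝ) ^ k * exp (2 / n * n) := by
        refine sum_le_sum fun S hS => ?_
        have := sum_powersetCard_pow_card_union_le S k (by positivity : (0 : ℝ) ≤ 2 / n)
        rwa [(mem_powersetCard.1 hS).2, Fintype.card_fin] at this
    _ = n.choose k * (2 / n) ^ k * (2 ^ k * exp 2) := by
        rw [div_mul_cancel₀ _ hn']
        simp only [mul_pow, sum_const, card_powersetCard, card_univ, Fintype.card_fin, nsmul_eq_mul]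
        ring

theorem expect_starCount_sq_le (hn : 2 ≤ n) (k : ℕ) :
    𝔼 e : Round n, starCount e k ^ 2 ≤
      (𝔼 e : Round n, starCount e k) ^ 2 + (𝔼 e : Round n, starCount e k) * (2 ^ k * exp 2) := by
  set μ : ℝ := n.choose k * (2 / n) ^ k
  have hμ : 0 ≤ μ := by positivity
  have hvw (v w : Fin n) : 𝔼 e : Round n, starCountAt e k v * starCountAt e k w ≤
      μ ^ 2 + if v = w then μ * (2 ^ k * exp 2) else 0 := by
    by_cases h : v = w
    · subst h
      simpa [← sq] using
        (expect_starCountAt_sq_le hn k v).trans (le_add_of_nonneg_left (sq_nonneg μ))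
    · simpa [h] using expect_starCountAt_mul_le h k
  rw [expect_starCount hn]
  simp_rw [starCount, sq, sum_mul_sum]
  rw [expect_sum_comm]
  calc ∑ v, 𝔼 e : Round n, ∑ w, starCountAt e k v * starCountAt e k w
      ≤ ∑ v : Fin n, ∑ w : Fin n, (μ ^ 2 + if v = w then μ * (2 ^ k * exp 2) else 0) := by
        refine sum_le_sum fun v _ => ?_
        rw [expect_sum_comm]
        exact sum_le_sum fun w _ => hvw v w
    _ = n * μ * (n * μ) + n * μ * (2 ^ k * exp 2) := by
        simp only [sum_add_distrib, sum_const, card_univ, Fintype.card_fin, nsmul_eq_mul,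
          sum_ite_eq, mem_univ, if_true]
        ring

theorem half_le_prob_starCount_ne_zero (hn : 2 ≤ n) {k : ℕ}
    (hk : 2 ^ k * exp 2 ≤ 𝔼 e : Round n, starCount e k) :
    1 / 2 ≤ 𝔼 e : Round n, if starCount e k = 0 then (0 : ℝ) else 1 := by
  set μ := 𝔼 e : Round n, starCount e k
  set P := 𝔼 e : Round n, if starCount e k = 0 then (0 : ℝ) else 1
  have hμ : 0 < μ := lt_of_lt_of_le (by positivity) hk
  have hP : 0 ≤ P := expect_nonneg fun e _ => by split_ifs <;> norm_num
  have h2 : 𝔼 e : Round n, starCount e k ^ 2 ≤ 2 * μ ^ 2 := by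
    nlinarith [expect_starCount_sq_le hn k]
  have h1 := sq_expect_le_expect_indicator_mul_expect_sq fun e : Round n => starCount e k
  have : μ ^ 2 ≤ P * (2 * μ ^ 2) := h1.trans (mul_le_mul_of_nonneg_left h2 hP)
  nlinarith [pow_pos hμ 2]

theorem div_two_le_expect_M (hn : 2 ≤ n) {k : ℕ} (hk : exp 2 * k ^ k ≤ n) :
    k / 2 ≤ 𝔼 e : Round n, (M e : ℝ) := by
  rcases Nat.eq_zero_or_pos k with rfl | hk0
  · simpa using expect_nonneg fun e _ => Nat.cast_nonneg (M e)
  have hkn : k ≤ n := by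
    have : (k : ℝ) ≤ k ^ k := by exact_mod_cast Nat.le_self_pow hk0.ne' k
    exact_mod_cast this.trans
      ((le_mul_of_one_le_left (by positivity) (one_le_exp zero_le_two)).trans hk)
  have hμ : 2 ^ k * exp 2 ≤ 𝔼 e : Round n, starCount e k := by
    have hn0 : (n : ℝ) ≠ 0 := by positivity
    calc 2 ^ k * exp 2 ≤ 2 ^ k * (n / k ^ k) := by
          gcongr
          rw [le_div_iff₀ (by positivity)]
          exact hk
      _ = n * ((n / k) ^ k * (2 / n) ^ k) := by
          rw [← mul_pow, show (n : ℝ) / k * (2 / n) = 2 / k by field_simp, div_pow]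
          ring
      _ ≤ n * (n.choose k * (2 / n) ^ k) := by
          gcongr
          exact pow_div_pow_le_choose hkn
      _ = _ := (expect_starCount hn k).symm
  calc (k : ℝ) / 2 ≤ k * 𝔼 e : Round n, if starCount e k = 0 then (0 : ℝ) else 1 := by
        nlinarith [half_le_prob_starCount_ne_zero hn hμ]
    _ = 𝔼 e : Round n, k * if starCount e k = 0 then (0 : ℝ) else 1 := by rw [mul_expect]
    _ ≤ 𝔼 e : Round n, (M e : ℝ) := by
        refine expect_le_expect fun e _ => ?_
        split_ifs with h
        · simp
        · simpa using le_M_of_starCount_ne_zero h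

end RandomRound

open Filter in
/-- There exist a constant `c > 0` and an integer `N` such that
for every `n ≥ N`, when the `n` edges of a round on `n` agents are chosen
independently and uniformly at random (i.e. uniformly over all rounds), the
expected value of `M e`, the maximum length of a monotone interference path
(one plus the maximum length of a directed path in the dependency DAG), is at
least `c * log n / log (log n)`. -/
theorem stmt3 :
    ∃ c : ℝ, 0 < c ∧ ∃ N : ℕ, ∀ n : ℕ, N ≤ n →
      c * Real.log n / Real.log (Real.log n) ≤
        (∑ e : Round n, (M e : ℝ)) / (Fintype.card (Round n)) := by
  refine ⟨1 / 8, by norm_num, ?_⟩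
  have hL : Tendsto (fun n : ℕ => log n) atTop atTop :=
    tendsto_log_atTop.comp tendsto_natCast_atTop_atTop
  have hl : Tendsto (fun n : ℕ => log (log n)) atTop atTop := tendsto_log_atTop.comp hL
  have hsmall : ∀ᶠ n : ℕ in atTop, log (log n) ≤ 1 / 4 * log n := by
    filter_upwards [(isLittleO_log_id_atTop.comp_tendsto hL).bound (by norm_num : (0 : ℝ) < 1 / 4)]
      with n hn
    simpa [abs_of_nonneg (log_natCast_nonneg n)] using (le_abs_self _).trans hn
  obtain ⟨N, hN⟩ := eventually_atTop.1
    ((hl.eventually_ge_atTop 1).and (hsmall.and (eventually_ge_atTop 2)))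
  refine ⟨N, fun n hn => ?_⟩
  obtain ⟨hl1, hl4, hn2⟩ := hN n hn
  obtain ⟨k, hLk, hk⟩ := exists_nat_le_and_exp_two_mul_pow_le hl1 (by linarith)
  rw [← Fintype.expect_eq_sum_div_card]
  calc 1 / 8 * log n / log (log n) = log n / (4 * log (log n)) / 2 := by ring
    _ ≤ k / 2 := by gcongr
    _ ≤ 𝔼 e : Round n, (M e : ℝ) := div_two_le_expect_M hn2 hk
end

section
/- Let n ≥ 2 and 1 ≤ k ≤ n. Suppose the n edges e_1, …, e_n of a round on n agents are chosen independently and uniformly at random among all C(n,2) unordered pairs of distinct elements of {1, …, n}. Then the probability that the round contains a monotone interference path of length k (i.e., that M(e) ≥ k) is at most 8^k · n / k!. -/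
/-!
Union bound over the positions of the path. A monotone path of length `k` occupies a `k`-subset of
the `n` positions: at most `C(n, k) ≤ n ^ k / k!` choices. For fixed positions the first edge is
arbitrary, each later edge must meet its predecessor (at most `2 n` of the `C(n, 2)` edges), and the
other `n - k` edges are free, so the probability is at most
`(n ^ k / k!) (2 n / C(n, 2)) ^ (k - 1) = (n ^ k / k!) (4 / (n - 1)) ^ (k - 1) ≤ 8 ^ (k - 1) n / k!`.
-/

open Finset

section RelChain

variable {β : Type*}

def IsRelChain (R : β → β → Prop) {k : ℕ} (f : Fin k → β) : Prop :=
  ∀ i j : Fin k, (i : ℕ) + 1 = j → R (f i) (f j)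

instance (R : β → β → Prop) [DecidableRel R] (k : ℕ) : DecidablePred (IsRelChain R (k := k)) :=
  fun f => inferInstanceAs (Decidable (∀ i j : Fin k, (i : ℕ) + 1 = j → R (f i) (f j)))

lemma IsRelChain.init {R : β → β → Prop} {m : ℕ} {f : Fin (m + 1) → β}
    (hf : IsRelChain R f) : IsRelChain R (Fin.init f) :=
  fun i j hij => hf i.castSucc j.castSucc hij

lemma card_isRelChain_le [Fintype β] [DecidableEq β] (R : β → β → Prop) [DecidableRel R]
    (d : ℕ) (hd : ∀ b, #{b' | R b b'} ≤ d) (m : ℕ) :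
    #{f : Fin (m + 1) → β | IsRelChain R f} ≤ Fintype.card β * d ^ m := by
  induction m with
  | zero => simpa using card_le_univ (α := Fin 1 → β) _
  | succ m ih =>
    have hfiber (g : Fin (m + 1) → β) :
        #{f ∈ {f : Fin (m + 2) → β | IsRelChain R f} | Fin.init f = g} ≤ d := by
      refine (card_le_card_of_injOn (fun f => f (Fin.last _)) ?_ ?_).trans (hd (g (Fin.last m)))
      · intro f hf
        simp only [coe_filter, mem_filter, mem_univ, true_and, Set.mem_ofPred_eq] at hf ⊢
        rw [← hf.2]
        exact hf.1 _ _ rfl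
      · intro f hf f' hf' hlast
        simp only [coe_filter, mem_filter, mem_univ, true_and, Set.mem_ofPred_eq] at hf hf'
        rw [← Fin.snoc_init_self f, ← Fin.snoc_init_self f', hf.2, hf'.2]
        exact congrArg _ hlast
    calc #{f : Fin (m + 2) → β | IsRelChain R f}
        ≤ d * #{g : Fin (m + 1) → β | IsRelChain R g} :=
          card_le_mul_card_image_of_maps_to (f := Fin.init)
            (fun f hf => by simpa using (mem_filter.mp hf).2.init) d fun g _ => hfiber g
      _ ≤ d * (Fintype.card β * d ^ m) := Nat.mul_le_mul_left d ih
      _ = Fintype.card β * d ^ (m + 1) := by ring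

end RelChain

lemma card_filter_comp_le {ι β : Type*} [Fintype ι] [DecidableEq ι] [Fintype β]
    {k : ℕ} {t : Fin k → ι} (ht : Function.Injective t) (P : (Fin k → β) → Prop)
    [DecidablePred P] :
    #{e : ι → β | P (e ∘ t)} ≤ #{c | P c} * Fintype.card β ^ (Fintype.card ι - k) := by
  have hcompl : Fintype.card {x // x ∉ Set.range t} = Fintype.card ι - k := by
    rw [Fintype.card_subtype_compl, Set.card_range_of_injective ht, Fintype.card_fin]
  calc #{e : ι → β | P (e ∘ t)}
      ≤ #(univ.filter P ×ˢ (univ : Finset ({x // x ∉ Set.range t} → β))) := by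
        refine card_le_card_of_injOn (fun e => (e ∘ t, fun x => e x)) ?_ ?_
        · intro e he
          simpa using he
        · intro e _ e' _ h
          simp only [Prod.mk.injEq] at h
          funext x
          by_cases hx : x ∈ Set.range t
          · obtain ⟨i, rfl⟩ := hx
            exact congrFun h.1 i
          · exact congrFun h.2 ⟨x, hx⟩
    _ = #{c | P c} * Fintype.card β ^ (Fintype.card ι - k) := by
        rw [card_product, card_univ, Fintype.card_fun, hcompl]

lemma card_pairs_meeting_le {α : Type*} [Fintype α] [DecidableEq α] (s : Finset α) :
    #{p : {p : Finset α // p.card = 2} | (s ∩ p.1).Nonempty} ≤ #s * Fintype.card α := by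
  calc #{p : {p : Finset α // p.card = 2} | (s ∩ p.1).Nonempty}
      = #((univ.filter fun p : {p : Finset α // p.card = 2} => (s ∩ p.1).Nonempty).image
          Subtype.val) :=
        (card_image_of_injective _ Subtype.val_injective).symm
    _ ≤ #(s.biUnion fun v => univ.image fun w => ({v, w} : Finset α)) := by
        refine card_le_card fun p hp => ?_
        simp only [mem_image, mem_filter, mem_univ, true_and] at hp
        obtain ⟨⟨p, hp2⟩, hmeet, rfl⟩ := hp
        obtain ⟨v, hv⟩ := hmeet
        obtain ⟨hvs, hvp : v ∈ p⟩ := mem_inter.mp hv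
        obtain ⟨a, b, -, hab⟩ := card_eq_two.mp hp2
        show p ∈ _
        rw [hab] at hvp ⊢
        simp only [mem_biUnion, mem_image, mem_univ, true_and]
        rcases mem_insert.mp hvp with rfl | hvb
        · exact ⟨v, hvs, b, rfl⟩
        · rw [mem_singleton.mp hvb] at hvs
          exact ⟨b, hvs, a, pair_comm _ _⟩
    _ ≤ ∑ v ∈ s, #(univ.image fun w => ({v, w} : Finset α)) := card_biUnion_le
    _ ≤ #s * Fintype.card α := by
        simpa using sum_le_sum fun v _ => card_image_le (s := (univ : Finset α))

lemma exists_isMonoPath_of_le_M {n k : ℕ} {e : Round n} (hk : k ≤ M e) :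
    ∃ t : Fin k → Fin n, IsMonoPath e t := by
  have hbdd : BddAbove {k | ∃ t : Fin k → Fin n, IsMonoPath e t} := ⟨n, fun k ⟨t, ht⟩ => by
    simpa using Fintype.card_le_of_injective t ht.1.injective⟩
  have hne : {k | ∃ t : Fin k → Fin n, IsMonoPath e t}.Nonempty :=
    ⟨0, Fin.elim0, fun i => i.elim0, fun i => i.elim0⟩
  obtain ⟨t, hmono, hmeet⟩ := Nat.sSup_mem hne hbdd
  exact ⟨t ∘ Fin.castLE hk, hmono.comp (Fin.strictMono_castLE hk),
    fun i j hij => hmeet _ _ hij⟩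

lemma exists_isRelChain_orderEmbOfFin_of_le_M {n k : ℕ} {e : Round n} (hk : k ≤ M e) :
    ∃ s : {s : Finset (Fin n) // s.card = k},
      IsRelChain (fun a b : Edge n => (a.1 ∩ b.1).Nonempty) (e ∘ s.1.orderEmbOfFin s.2) := by
  obtain ⟨t, hmono, hmeet⟩ := exists_isMonoPath_of_le_M hk
  have hcard : #(univ.image t) = k := by
    rw [card_image_of_injective _ hmono.injective, card_fin]
  refine ⟨⟨_, hcard⟩, ?_⟩
  rwa [← orderEmbOfFin_unique hcard (fun i => mem_image_of_mem t (mem_univ i)) hmono]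

lemma card_filter_succ_le_M_le (n m : ℕ) :
    #{e : Round n | m + 1 ≤ M e} ≤ n.choose (m + 1) *
      (Fintype.card (Edge n) * (2 * n) ^ m * Fintype.card (Edge n) ^ (n - (m + 1))) := by
  have hdeg (a : Edge n) : #{b : Edge n | (a.1 ∩ b.1).Nonempty} ≤ 2 * n := by
    simpa [a.2] using card_pairs_meeting_le a.1
  calc #{e : Round n | m + 1 ≤ M e}
      ≤ #(univ.biUnion fun s : {s : Finset (Fin n) // s.card = m + 1} =>
          {e : Round n | IsRelChain (fun a b : Edge n => (a.1 ∩ b.1).Nonempty)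
            (e ∘ s.1.orderEmbOfFin s.2)}) :=
        card_le_card fun e he => by
          simpa using exists_isRelChain_orderEmbOfFin_of_le_M (mem_filter.mp he).2
    _ ≤ #(univ : Finset {s : Finset (Fin n) // s.card = m + 1}) *
          (Fintype.card (Edge n) * (2 * n) ^ m * Fintype.card (Edge n) ^ (n - (m + 1))) :=
        card_biUnion_le_card_mul _ _ _ fun s _ =>
          (card_filter_comp_le (s.1.orderEmbOfFin s.2).injective _).trans <| by
            simpa using Nat.mul_le_mul_right _ (card_isRelChain_le _ _ hdeg m)
    _ = _ := by rw [card_univ, Fintype.card_finset_len, Fintype.card_fin]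

lemma two_mul_sq_le_eight_mul_choose_two {n : ℕ} (hn : 2 ≤ n) : 2 * n ^ 2 ≤ 8 * n.choose 2 := by
  have h : n.choose 2 * 2 = n * (n - 1) := by
    rw [Nat.choose_two_right, Nat.div_two_mul_two_of_even (Nat.even_mul_pred_self n)]
  obtain ⟨p, rfl⟩ : ∃ p, n = p + 2 := ⟨n - 2, by omega⟩
  rw [show p + 2 - 1 = p + 1 by omega] at h
  nlinarith

lemma card_filter_succ_le_M_mul_factorial_le {n m : ℕ} (hn : 2 ≤ n) (hmn : m + 1 ≤ n) :
    #{e : Round n | m + 1 ≤ M e} * (m + 1).factorial ≤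
      8 ^ (m + 1) * n * Fintype.card (Edge n) ^ n := by
  obtain ⟨r, hr⟩ : ∃ r, n = m + 1 + r := ⟨n - (m + 1), by omega⟩
  have hE : n * (2 * n) ≤ 8 * Fintype.card (Edge n) := by
    rw [Fintype.card_finset_len, Fintype.card_fin]
    linarith [two_mul_sq_le_eight_mul_choose_two hn]
  have hchoose : (m + 1).factorial * n.choose (m + 1) ≤ n ^ (m + 1) :=
    Nat.descFactorial_eq_factorial_mul_choose n (m + 1) ▸ Nat.descFactorial_le_pow n (m + 1)
  set E := Fintype.card (Edge n)
  calc #{e : Round n | m + 1 ≤ M e} * (m + 1).factorial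
      ≤ (m + 1).factorial * n.choose (m + 1) * (E * (2 * n) ^ m * E ^ r) := by
        rw [mul_comm, mul_assoc, show r = n - (m + 1) by omega]
        gcongr
        exact card_filter_succ_le_M_le n m
    _ ≤ n ^ (m + 1) * (E * (2 * n) ^ m * E ^ r) := by gcongr
    _ = n * (n * (2 * n)) ^ m * (E * E ^ r) := by ring
    _ ≤ n * (8 * E) ^ m * (E * E ^ r) := by gcongr
    _ = 8 ^ m * n * E ^ n := by rw [hr]; ring
    _ ≤ 8 ^ (m + 1) * n * E ^ n := by gcongr <;> omega

/-- Let `n ≥ 2` and `1 ≤ k ≤ n`, and choose the `n` edges of a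
round on `n` agents independently and uniformly at random (i.e. uniformly over
all rounds). Then the probability that the round contains a monotone
interference path of length `k` (i.e. that `M e ≥ k`) is at most
`8^k * n / k!`. -/
theorem stmt7 (n k : ℕ) (hn : 2 ≤ n) (hk1 : 1 ≤ k) (hkn : k ≤ n) :
    (Nat.card {e : Round n // k ≤ M e} : ℝ) / (Fintype.card (Round n)) ≤
      8 ^ k * (n : ℝ) / (k.factorial : ℝ) := by
  obtain ⟨m, rfl⟩ : ∃ m, k = m + 1 := ⟨k - 1, by omega⟩
  have hE : 0 < Fintype.card (Edge n) := by
    rw [Fintype.card_finset_len, Fintype.card_fin]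
    exact Nat.choose_pos hn
  rw [Nat.card_eq_fintype_card, Fintype.card_subtype, Fintype.card_fun, Fintype.card_fin,
    div_le_div_iff₀ (by positivity) (by positivity)]
  exact_mod_cast card_filter_succ_le_M_mul_factorial_le hn hkn
end

section
/- For every constant c > 0 there exists an integer N such that for every n ≥ N, setting k = ⌈(c+3) · (log n)/(log log n)⌉, one has 8^k · n / k! ≤ n^{−c}. -/
/-!
Since `k! ≥ (k/e)^k`, it suffices that `(1 + c) log n + k (1 + log 8) ≤ k log k`. With
`L = log n` and `x = (c + 3) L / log L ≤ k ≤ x + 1`, one has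
`k log k ≥ x log x = (c + 3) L (1 + o(1))` while `k (1 + log 8) = o(L)`, so the margin `2L`
between `(c + 3) L` and `(1 + c) L` absorbs the error terms once `n` is large.
-/

open Finset

open Real Filter Topology
open scoped Nat

lemma pow_div_exp_le_factorial (k : ℕ) : ((k : ℝ) / exp 1) ^ k ≤ k ! := by
  have h := pow_div_factorial_le_exp (x := (k : ℝ)) (by positivity) k
  rw [← exp_one_pow, div_le_iff₀ (by positivity)] at h
  rw [div_pow, div_le_iff₀ (by positivity)]
  linarith

lemma pow_mul_div_factorial_le_rpow_neg {a c : ℝ} {n k : ℕ} (ha : 0 < a) (hn : 0 < n)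
    (hk : 0 < k) (h : (1 + c) * log n + k * (1 + log a) ≤ k * log k) :
    a ^ k * n / k ! ≤ (n : ℝ) ^ (-c) := by
  have hn' : (0 : ℝ) < n := by exact_mod_cast hn
  have hk' : (0 : ℝ) < k := by exact_mod_cast hk
  calc a ^ k * n / k ! ≤ a ^ k * n / (k / exp 1) ^ k := by
        gcongr
        exact pow_div_exp_le_factorial k
    _ ≤ (n : ℝ) ^ (-c) := by
        rw [div_le_iff₀ (by positivity), ← log_le_log_iff (by positivity) (by positivity),
          log_mul (by positivity) hn'.ne', log_mul (by positivity) (by positivity), log_pow,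
          log_pow, log_rpow hn', log_div hk'.ne' (exp_pos 1).ne', log_exp]
        linarith

lemma mul_log_le_natCeil_mul_log {x : ℝ} (hx : 1 ≤ x) : x * log x ≤ ⌈x⌉₊ * log ⌈x⌉₊ := by
  have hcx := Nat.le_ceil x
  exact mul_le_mul hcx (log_le_log (by linarith) hcx) (log_nonneg hx) (by linarith)

lemma tendsto_mul_div_log_atTop {β : ℝ} (hβ : 0 < β) :
    Tendsto (fun L => β * L / log L) atTop atTop := by
  have hpos : ∀ᶠ L : ℝ in atTop, log L / L ∈ Set.Ioi 0 := by
    filter_upwards [eventually_gt_atTop 1] with L hL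
    exact div_pos (log_pos hL) (by linarith)
  have hinv := (tendsto_nhdsWithin_iff.2
    ⟨isLittleO_log_id_atTop.tendsto_div_nhds_zero, hpos⟩).inv_tendsto_nhdsGT_zero
  simpa only [mul_div_assoc, Pi.inv_apply, id, inv_div] using hinv.const_mul_atTop hβ

lemma tendsto_mul_log_sub_div {β b : ℝ} (hβ : 0 < β) :
    Tendsto (fun L => let x := β * L / log L; (x * log x - (x + 1) * b) / L)
      atTop (𝓝 β) := by
  have hL : Tendsto (fun L : ℝ => L⁻¹) atTop (𝓝 0) := tendsto_inv_atTop_zero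
  have hl : Tendsto (fun L : ℝ => (log L)⁻¹) atTop (𝓝 0) :=
    tendsto_inv_atTop_zero.comp tendsto_log_atTop
  have hll : Tendsto (fun L : ℝ => log (log L) / log L) atTop (𝓝 0) :=
    isLittleO_log_id_atTop.tendsto_div_nhds_zero.comp tendsto_log_atTop
  have hlim := ((tendsto_const_nhds (x := β)).add
    (((hl.const_mul (log β - b)).sub hll).const_mul β)).sub (hL.const_mul b)
  rw [show β + β * ((log β - b) * 0 - 0) - b * 0 = β by ring] at hlim
  refine hlim.congr' ?_
  filter_upwards [eventually_gt_atTop 1] with L hL1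
  have hL0 : 0 < L := by linarith
  have hl0 : 0 < log L := log_pos hL1
  simp only
  rw [log_div (by positivity) hl0.ne', log_mul hβ.ne' hL0.ne']
  field_simp
  ring

lemma eventually_add_mul_le_natCeil_mul_log {α β b : ℝ} (hβ : 0 < β) (hαβ : α < β)
    (hb : 0 ≤ b) :
    ∀ᶠ L in atTop,
      α * L + ⌈β * L / log L⌉₊ * b ≤ ⌈β * L / log L⌉₊ * log ⌈β * L / log L⌉₊ := by
  filter_upwards [(tendsto_mul_log_sub_div (b := b) hβ).eventually (lt_mem_nhds hαβ),
    (tendsto_mul_div_log_atTop hβ).eventually_ge_atTop 1, eventually_gt_atTop 0]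
    with L hlim hx hL
  set x := β * L / log L
  have hcx : (⌈x⌉₊ : ℝ) ≤ x + 1 := (Nat.ceil_lt_add_one (by linarith)).le
  have := mul_log_le_natCeil_mul_log hx
  rw [lt_div_iff₀ hL] at hlim
  nlinarith

/-- For every constant `c > 0` there exists an integer `N` such
that for every `n ≥ N`, setting `k = ⌈(c+3) * log n / log (log n)⌉`, one has
`8^k * n / k! ≤ n^(-c)`. -/
theorem stmt9 (c : ℝ) (hc : 0 < c) :
    ∃ N : ℕ, ∀ n : ℕ, N ≤ n →
      ∀ k : ℕ, k = ⌈(c + 3) * Real.log n / Real.log (Real.log n)⌉₊ →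
        8 ^ k * (n : ℝ) / (k.factorial : ℝ) ≤ (n : ℝ) ^ (-c) := by
  have hβ : 0 < c + 3 := by linarith
  have hlog : Tendsto (fun n : ℕ => log n) atTop atTop :=
    tendsto_log_atTop.comp tendsto_natCast_atTop_atTop
  have hmargin := eventually_add_mul_le_natCeil_mul_log (α := 1 + c) (b := 1 + log 8) hβ
    (by linarith) (by positivity)
  obtain ⟨N, hN⟩ := eventually_atTop.1 <| hlog.eventually <| hmargin.and <|
    ((tendsto_mul_div_log_atTop hβ).eventually_gt_atTop 0).and (eventually_gt_atTop 0)
  refine ⟨N, fun n hn k hk => ?_⟩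
  obtain ⟨hineq, hx, hL⟩ := hN n hn
  have hn0 : 0 < n := Nat.pos_of_ne_zero fun h => by simp [h] at hL
  subst hk
  exact pow_mul_div_factorial_le_rpow_neg (by norm_num) hn0 (Nat.ceil_pos.2 hx) hineq
end
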